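/- arXiv:math/0609661 — 9 statements merged into one kernel-verified Lean document; each statement's English description precedes it below -/
import Mathlib

section
/- If B = H⊗g + S is the decomposition of a symmetric bilinear form B on a 2-dimensional inner product space V with values in a normal space W, where g is the metric, H = (1/2)·trace_g(B) ∈ W, and S is trace-free, and if the contraction ∑_{i,j} ⟨H, S(e_i,e_j)⟩ S(e_i,e_j) = 0 over an orthonormal basis {e_i}, then ⟨H, S(X,Y)⟩ = 0 for all X, Y ∈ V. -/
/-!
Pairing the contraction with `H` gives `∑ᵢⱼ ⟪H, S(eᵢ,eⱼ)⟫² = 0`, so every `⟪H, S(eᵢ,eⱼ)⟫`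
vanishes. Since `S` is bilinear, so is `(X, Y) ↦ ⟪H, S(X,Y)⟫`, which therefore vanishes
identically once it vanishes on pairs of basis vectors.
-/

open scoped RealInnerProductSpace

section

variable {ι V W : Type*} [NormedAddCommGroup V] [InnerProductSpace ℝ V]
  [NormedAddCommGroup W] [InnerProductSpace ℝ W]

theorem inner_eq_zero_of_sum_inner_smul_eq_zero [Fintype ι] {H : W} {v : ι → W}
    (h : ∑ i, ⟪H, v i⟫ • v i = 0) (i : ι) : ⟪H, v i⟫ = 0 := by
  have hsq : ∑ i, ⟪H, v i⟫ ^ 2 = 0 := by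
    simpa only [inner_sum, real_inner_smul_right, sq, inner_zero_right] using congrArg (⟪H, ·⟫) h
  exact pow_eq_zero_iff two_ne_zero |>.mp <|
    (Finset.sum_eq_zero_iff_of_nonneg fun j _ => sq_nonneg _).mp hsq i (Finset.mem_univ i)

noncomputable def traceFreePart (B : V →ₗ[ℝ] V →ₗ[ℝ] W) (H : W) : V →ₗ[ℝ] V →ₗ[ℝ] W :=
  B - (innerₗ V).compr₂ (LinearMap.toSpanSingleton ℝ W H)

theorem traceFreePart_apply (B : V →ₗ[ℝ] V →ₗ[ℝ] W) (H : W) (X Y : V) :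
    traceFreePart B H X Y = B X Y - ⟪X, Y⟫ • H :=
  rfl

theorem inner_bilin_eq_zero_of_basis (b : Module.Basis ι ℝ V) {β : V →ₗ[ℝ] V →ₗ[ℝ] W} {H : W}
    (h : ∀ i j, ⟪H, β (b i) (b j)⟫ = 0) (X Y : V) : ⟪H, β X Y⟫ = 0 := by
  have : β.compr₂ (innerₗ W H) = 0 := LinearMap.ext_basis b b h
  exact LinearMap.congr_fun₂ this X Y

end

theorem stmt_0_general {V W : Type*}
    [NormedAddCommGroup V] [InnerProductSpace ℝ V]
    [NormedAddCommGroup W] [InnerProductSpace ℝ W]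
    (b : OrthonormalBasis (Fin 2) ℝ V)
    (B : V →ₗ[ℝ] V →ₗ[ℝ] W)
    (H : W)
    (S : V → V → W) (hS : ∀ X Y : V, S X Y = B X Y - ⟪X, Y⟫ • H)
    (hcontr : ∑ i : Fin 2, ∑ j : Fin 2, ⟪H, S (b i) (b j)⟫ • S (b i) (b j) = 0) :
    ∀ X Y : V, ⟪H, S X Y⟫ = 0 := by
  obtain rfl : S = fun X Y => traceFreePart B H X Y :=
    funext₂ fun X Y => (hS X Y).trans (traceFreePart_apply B H X Y).symm
  have hbasis : ∀ i j, ⟪H, traceFreePart B H (b.toBasis i) (b.toBasis j)⟫ = 0 := by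
    rw [← Fintype.sum_prod_type' (fun i j => ⟪H, traceFreePart B H (b i) (b j)⟫ •
      traceFreePart B H (b i) (b j))] at hcontr
    simpa only [OrthonormalBasis.coe_toBasis] using
      fun i j => inner_eq_zero_of_sum_inner_smul_eq_zero hcontr (i, j)
  exact inner_bilin_eq_zero_of_basis b.toBasis hbasis

/-- if `B = H ⊗ g + S` with `S` trace-free on a 2-dimensional inner product
space, and the contraction `∑ᵢⱼ ⟪H, S(eᵢ,eⱼ)⟫ • S(eᵢ,eⱼ)` vanishes, then `⟪H, S(X,Y)⟫ = 0`
for all `X, Y`. -/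
theorem stmt_0 {V W : Type*}
    [NormedAddCommGroup V] [InnerProductSpace ℝ V]
    [NormedAddCommGroup W] [InnerProductSpace ℝ W]
    (b : OrthonormalBasis (Fin 2) ℝ V)
    (B : V →ₗ[ℝ] V →ₗ[ℝ] W) (hBsymm : ∀ X Y : V, B X Y = B Y X)
    (H : W) (hH : H = (1 / 2 : ℝ) • (B (b 0) (b 0) + B (b 1) (b 1)))
    (S : V → V → W) (hS : ∀ X Y : V, S X Y = B X Y - ⟪X, Y⟫ • H)
    (hcontr : ∑ i : Fin 2, ∑ j : Fin 2, ⟪H, S (b i) (b j)⟫ • S (b i) (b j) = 0) :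
    ∀ X Y : V, ⟪H, S X Y⟫ = 0 :=
  stmt_0_general b B H S hS hcontr
end

section
/- For a symmetric bilinear form B on a 2-dimensional inner product space V with values in an inner product space W, with H = (1/2)·trace_g(B), the condition ⟨−|H|²g + H·B, B⟩ = 0 (as an element of W paired with all normal vectors, i.e. ∑_{i,j}(−|H|²g(e_i,e_j) + ⟨H,B(e_i,e_j)⟩)B(e_i,e_j) = 0) implies H·B = |H|²g, i.e. ⟨H, B(X,Y)⟩ = |H|²⟨X,Y⟩ for all X,Y. -/
/-!
Let `q(X, Y) = ⟪H, B X Y⟫ - ‖H‖² ⟪X, Y⟫`. Since `H` is the mean of the `B (eᵢ, eᵢ)`, `q` is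
traceless, so pairing the hypothesis with `H` gives `0 = ∑ᵢⱼ qᵢⱼ ⟪H, B(eᵢ, eⱼ)⟫ = ∑ᵢⱼ qᵢⱼ²`.
Hence `q` vanishes on the basis, and so everywhere.
-/

open scoped RealInnerProductSpace

open Finset

section TracelessPart

variable {ι : Type*} [Fintype ι] [DecidableEq ι]

lemma sum_sum_sub_diag_mul_eq_sum_sum_mul_self (m : ι → ι → ℝ) (h : ℝ)
    (htr : ∑ i, m i i = Fintype.card ι * h) :
    ∑ i, ∑ j, (m i j - h * if i = j then 1 else 0) * m i j
      = ∑ i, ∑ j, (m i j - h * if i = j then 1 else 0) *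
          (m i j - h * if i = j then 1 else 0) := by
  have hdiag : ∑ i, ∑ j, (m i j - h * if i = j then 1 else 0) * (h * if i = j then 1 else 0)
      = 0 := by
    simp only [mul_ite, mul_one, mul_zero, sum_ite_eq, mem_univ, if_true, ← sum_mul,
      sum_sub_distrib, htr, sum_const, card_univ, nsmul_eq_mul, sub_self, zero_mul]
  refine sub_eq_zero.mp (Eq.trans ?_ hdiag)
  simp only [← sum_sub_distrib]
  refine sum_congr rfl fun i _ => sum_congr rfl fun j _ => ?_
  ring

lemma eq_diag_of_sum_sum_sub_diag_mul_eq_zero (m : ι → ι → ℝ) (h : ℝ)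
    (htr : ∑ i, m i i = Fintype.card ι * h)
    (hsum : ∑ i, ∑ j, (m i j - h * if i = j then 1 else 0) * m i j = 0) (i j : ι) :
    m i j = h * if i = j then 1 else 0 := by
  rw [sum_sum_sub_diag_mul_eq_sum_sum_mul_self m h htr] at hsum
  have hrow := (sum_eq_zero_iff_of_nonneg fun i _ => sum_nonneg fun j _ => mul_self_nonneg _).mp
    hsum i (mem_univ i)
  rw [sum_mul_self_eq_zero_iff] at hrow
  exact sub_eq_zero.mp (hrow j (mem_univ j))

end TracelessPart

section InnerProductSpace

variable {ι V W : Type*} [Fintype ι] [DecidableEq ι]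
    [NormedAddCommGroup V] [InnerProductSpace ℝ V]
    [NormedAddCommGroup W] [InnerProductSpace ℝ W]

lemma OrthonormalBasis.inner_apply_eq_mul_inner_of_forall_ite (b : OrthonormalBasis ι ℝ V)
    (B : V →ₗ[ℝ] V →ₗ[ℝ] W) (H : W) (c : ℝ)
    (hb : ∀ i j, ⟪H, B (b i) (b j)⟫ = c * if i = j then 1 else 0) (X Y : V) :
    ⟪H, B X Y⟫ = c * ⟪X, Y⟫ := by
  have hext : B.compr₂ (innerₗ W H) = c • innerₗ V :=
    LinearMap.ext_basis b.toBasis b.toBasis fun i j => by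
      simp [hb, orthonormal_iff_ite.mp b.orthonormal]
  simpa using LinearMap.congr_fun₂ hext X Y

theorem inner_eq_norm_sq_mul_inner_of_sum_smul_eq_zero (b : OrthonormalBasis ι ℝ V)
    (B : V →ₗ[ℝ] V →ₗ[ℝ] W) (H : W) (hH : (Fintype.card ι : ℝ) • H = ∑ i, B (b i) (b i))
    (hcontr : ∑ i, ∑ j,
        (⟪H, B (b i) (b j)⟫ - ‖H‖ ^ 2 * (if i = j then (1 : ℝ) else 0)) • B (b i) (b j) = 0)
    (X Y : V) : ⟪H, B X Y⟫ = ‖H‖ ^ 2 * ⟪X, Y⟫ := by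
  have htr : ∑ i, ⟪H, B (b i) (b i)⟫ = Fintype.card ι * ‖H‖ ^ 2 := by
    rw [← inner_sum, ← hH, real_inner_smul_right, real_inner_self_eq_norm_sq]
  have hsum := congrArg (⟪H, ·⟫) hcontr
  simp only [inner_sum, real_inner_smul_right, inner_zero_right] at hsum
  exact b.inner_apply_eq_mul_inner_of_forall_ite B H _
    (eq_diag_of_sum_sum_sub_diag_mul_eq_zero _ _ htr hsum) X Y

end InnerProductSpace

theorem stmt_1_general {V W : Type*}
    [NormedAddCommGroup V] [InnerProductSpace ℝ V]
    [NormedAddCommGroup W] [InnerProductSpace ℝ W]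
    (b : OrthonormalBasis (Fin 2) ℝ V)
    (B : V →ₗ[ℝ] V →ₗ[ℝ] W)
    (H : W) (hH : H = (1 / 2 : ℝ) • (B (b 0) (b 0) + B (b 1) (b 1)))
    (hcontr : ∑ i : Fin 2, ∑ j : Fin 2,
        (⟪H, B (b i) (b j)⟫ - ‖H‖ ^ 2 * (if i = j then (1 : ℝ) else 0)) • B (b i) (b j)
          = 0) :
    ∀ X Y : V, ⟪H, B X Y⟫ = ‖H‖ ^ 2 * ⟪X, Y⟫ := by
  refine inner_eq_norm_sq_mul_inner_of_sum_smul_eq_zero b B H ?_ hcontr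
  rw [hH, Fin.sum_univ_two, Fintype.card_fin, smul_smul]
  norm_num

/-- for a symmetric `W`-valued bilinear form `B` on a 2-dimensional inner
product space with `H = (1/2) trace B`, the vanishing of
`∑ᵢⱼ (⟪H,B(eᵢ,eⱼ)⟫ − |H|² δᵢⱼ) • B(eᵢ,eⱼ)` implies `⟪H, B(X,Y)⟫ = |H|² ⟪X,Y⟫`. -/
theorem stmt_1 {V W : Type*}
    [NormedAddCommGroup V] [InnerProductSpace ℝ V]
    [NormedAddCommGroup W] [InnerProductSpace ℝ W]
    (b : OrthonormalBasis (Fin 2) ℝ V)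
    (B : V →ₗ[ℝ] V →ₗ[ℝ] W) (hBsymm : ∀ X Y : V, B X Y = B Y X)
    (H : W) (hH : H = (1 / 2 : ℝ) • (B (b 0) (b 0) + B (b 1) (b 1)))
    (hcontr : ∑ i : Fin 2, ∑ j : Fin 2,
        (⟪H, B (b i) (b j)⟫ - ‖H‖ ^ 2 * (if i = j then (1 : ℝ) else 0)) • B (b i) (b j)
          = 0) :
    ∀ X Y : V, ⟪H, B X Y⟫ = ‖H‖ ^ 2 * ⟪X, Y⟫ :=
  stmt_1_general b B H hH hcontr
end

section
/- The curve γ : ℝ → ℝⁿ, γ(t) = t³a for a fixed nonzero vector a ∈ ℝⁿ, is not harmonic (its tension field γ'' = 6ta is not identically zero), yet its biharmonic stress-energy tensor S₂ vanishes identically. -/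
open scoped RealInnerProductSpace

section PowSmulConst

variable {𝕜 F : Type*} [NontriviallyNormedField 𝕜] [NormedAddCommGroup F] [NormedSpace 𝕜 F]

theorem iteratedDeriv_pow_smul_const (m k : ℕ) (v : F) (x : 𝕜) :
    iteratedDeriv k (fun t ↦ t ^ m • v) x = ((m.descFactorial k : 𝕜) * x ^ (m - k)) • v := by
  rw [iteratedDeriv_smul_const (by fun_prop), iteratedDeriv_pow]

theorem deriv_pow_smul_const (m : ℕ) (v : F) (x : 𝕜) :
    deriv (fun t ↦ t ^ m • v) x = ((m : 𝕜) * x ^ (m - 1)) • v := by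
  rw [← iteratedDeriv_one, iteratedDeriv_pow_smul_const, Nat.descFactorial_one]

end PowSmulConst

/-- the curve `γ(t) = t³ a` (`a ≠ 0`) is not harmonic (its tension field
`γ'' = 6 t a` does not vanish identically) but its biharmonic stress-energy tensor
`S₂ = (1/2)|γ''|² − ⟨γ', γ'''⟩` vanishes identically. -/
theorem stmt_5 {n : ℕ} (a : EuclideanSpace ℝ (Fin n)) (ha : a ≠ 0)
    (γ : ℝ → EuclideanSpace ℝ (Fin n)) (hγ : ∀ s : ℝ, γ s = s ^ 3 • a) :
    (¬ ∀ s : ℝ, iteratedDeriv 2 γ s = 0) ∧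
      (∀ s : ℝ, (1 / 2) * ‖iteratedDeriv 2 γ s‖ ^ 2
          - ⟪deriv γ s, iteratedDeriv 3 γ s⟫ = 0) := by
  obtain rfl : γ = fun t ↦ t ^ 3 • a := funext hγ
  have hγ' (s : ℝ) : deriv (fun t ↦ t ^ 3 • a) s = (3 * s ^ 2) • a := by
    simp [deriv_pow_smul_const]
  have hγ'' (s : ℝ) : iteratedDeriv 2 (fun t ↦ t ^ 3 • a) s = (6 * s) • a := by
    norm_num [iteratedDeriv_pow_smul_const, Nat.descFactorial]
  have hγ''' (s : ℝ) : iteratedDeriv 3 (fun t ↦ t ^ 3 • a) s = (6 : ℝ) • a := by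
    norm_num [iteratedDeriv_pow_smul_const, Nat.descFactorial]
  refine ⟨fun h ↦ ha ?_, fun s ↦ ?_⟩
  · simpa [hγ''] using h 1
  · rw [hγ', hγ'', hγ''', norm_smul, real_inner_smul_left, real_inner_smul_right,
      real_inner_self_eq_norm_sq, Real.norm_eq_abs, mul_pow, sq_abs]
    ring
end

section
/- For a curve γ : I → ℝⁿ parametrized by arc-length, the vanishing of the biharmonic stress-energy tensor S₂ implies γ is a geodesic (γ'' = 0). -/
open scoped RealInnerProductSpace

/-- for a smooth curve in `ℝⁿ` parametrized by arc-length, the vanishing of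
the biharmonic stress-energy tensor `S₂ = (1/2)|γ''|² − ⟨γ', γ'''⟩` forces `γ'' = 0`,
i.e. `γ` is a geodesic. -/
theorem stmt_6 {n : ℕ} (γ : ℝ → EuclideanSpace ℝ (Fin n))
    (hsmooth : ContDiff ℝ (⊤ : ℕ∞) γ)
    (harc : ∀ s : ℝ, ‖deriv γ s‖ = 1)
    (hS2 : ∀ s : ℝ, (1 / 2) * ‖iteratedDeriv 2 γ s‖ ^ 2
        - ⟪deriv γ s, iteratedDeriv 3 γ s⟫ = 0) :
    ∀ s : ℝ, iteratedDeriv 2 γ s = 0 := by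
  set g := deriv γ with hgdef
  have hsm : ContDiff ℝ (⊤ : ℕ∞) γ := hsmooth.of_le (by simp)
  have hg : ContDiff ℝ (⊤ : ℕ∞) g := (contDiff_infty_iff_deriv.mp hsm).2
  have hg1 : ContDiff ℝ (⊤ : ℕ∞) (deriv g) := (contDiff_infty_iff_deriv.mp hg).2
  have hdg : ∀ s : ℝ, HasDerivAt g (deriv g s) s :=
    fun s => (hg.differentiable (by simp) s).hasDerivAt
  have hdg1 : ∀ s : ℝ, HasDerivAt (deriv g) (deriv (deriv g) s) s :=
    fun s => (hg1.differentiable (by simp) s).hasDerivAt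
  -- first derivative of ⟪g, g⟫ = 1
  have h1 : ∀ s : ℝ, ⟪g s, deriv g s⟫ + ⟪g s, deriv g s⟫ = 0 := by
    intro s
    have hF : HasDerivAt (fun t => ⟪g t, g t⟫)
        (⟪g s, deriv g s⟫ + ⟪deriv g s, g s⟫) s := (hdg s).inner ℝ (hdg s)
    have hconst : (fun t => ⟪g t, g t⟫) = fun _ : ℝ => (1 : ℝ) := by
      funext t
      rw [real_inner_self_eq_norm_sq, harc t]; norm_num
    rw [hconst] at hF
    have := hF.unique (hasDerivAt_const s 1)
    have hc : ⟪deriv g s, g s⟫ = ⟪g s, deriv g s⟫ := real_inner_comm _ _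
    linarith [this, hc]
  have h1' : ∀ s : ℝ, ⟪g s, deriv g s⟫ = 0 := fun s => by linarith [h1 s]
  -- second derivative: ⟪g, g''⟫ = -‖g'‖²
  have h2 : ∀ s : ℝ, ⟪g s, deriv (deriv g) s⟫ = -‖deriv g s‖ ^ 2 := by
    intro s
    have hF : HasDerivAt (fun t => ⟪g t, deriv g t⟫)
        (⟪g s, deriv (deriv g) s⟫ + ⟪deriv g s, deriv g s⟫) s :=
      (hdg s).inner ℝ (hdg1 s)
    have hconst : (fun t => ⟪g t, deriv g t⟫) = fun _ : ℝ => (0 : ℝ) := by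
      funext t; exact h1' t
    rw [hconst] at hF
    have := hF.unique (hasDerivAt_const s 0)
    rw [real_inner_self_eq_norm_sq] at this
    linarith [this]
  intro s
  have e2 : iteratedDeriv 2 γ = deriv g := by
    rw [iteratedDeriv_succ, iteratedDeriv_one]
  have e3 : iteratedDeriv 3 γ = deriv (deriv g) := by
    rw [iteratedDeriv_succ, e2]
  have hs := hS2 s
  rw [e2, e3] at hs
  rw [e2]
  have : ‖deriv g s‖ ^ 2 = 0 := by
    rw [h2 s] at hs; linarith
  have : ‖deriv g s‖ = 0 := by nlinarith [norm_nonneg (deriv g s), this]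
  simpa using this
end

section
/- For an oriented submanifold M^m of ℝⁿ, the stress-energy tensor of the Gauss map satisfies the identity S^G = (Ric − (r/2)g) − (1/2)S₂^i + (1/4)|τ(i)|² g, where i : M → ℝⁿ is the inclusion, S₂^i its biharmonic stress-energy tensor, r the scalar curvature, and τ(i) = mH. -/
open scoped RealInnerProductSpace

theorem stmt_9_general {V W : Type*}
    [NormedAddCommGroup V] [InnerProductSpace ℝ V]
    [NormedAddCommGroup W] [InnerProductSpace ℝ W]
    {m : ℕ}
    (B : V →ₗ[ℝ] V →ₗ[ℝ] W)
    (H : W)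
    (τ : W) (hτ : τ = (m : ℝ) • H)
    (Ric : V → V → ℝ) (r : ℝ)
    (Gpull : V → V → ℝ)
    (hGpull : ∀ X Y : V, Gpull X Y = (m : ℝ) * ⟪H, B X Y⟫ - Ric X Y)
    (eG : ℝ) (heG : eG = ((m : ℝ) ^ 2 / 2) * ‖H‖ ^ 2 - r / 2)
    (SG : V → V → ℝ) (hSG : ∀ X Y : V, SG X Y = eG * ⟪X, Y⟫ - Gpull X Y)
    (S2 : V → V → ℝ)
    (hS2 : ∀ X Y : V, S2 X Y = -(1 / 2) * ‖τ‖ ^ 2 * ⟪X, Y⟫ + 2 * ⟪τ, B X Y⟫) :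
    ∀ X Y : V, SG X Y
      = (Ric X Y - r / 2 * ⟪X, Y⟫) - (1 / 2) * S2 X Y + (1 / 4) * ‖τ‖ ^ 2 * ⟪X, Y⟫ := by
  intro X Y
  have hτ_sq : ‖τ‖ ^ 2 = (m : ℝ) ^ 2 * ‖H‖ ^ 2 := by
    rw [hτ, norm_smul, mul_pow, Real.norm_natCast]
  have hτ_B : ⟪τ, B X Y⟫ = m * ⟪H, B X Y⟫ := by
    rw [hτ, real_inner_smul_left]
  rw [hSG, hS2, hGpull, heG, hτ_sq, hτ_B]
  ring

/-- the algebraic identity `S^G = (Ric − (r/2) g) − (1/2) S₂^i + (1/4)|τ(i)|² g`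
for an oriented submanifold `Mᵐ ⊂ ℝⁿ`, at a point.  Here `B` is the second fundamental form,
`H = (1/m) trace B`, `τ = m H` is the tension field of the inclusion, `r = trace Ric`,
`G*g_can = m⟨H,B⟩ − Ric`, `e(G) = (m²/2)|H|² − r/2`, `S^G = e(G) g − G*g_can`, and
`S₂(X,Y) = −(1/2)|τ|² ⟨X,Y⟩ + 2⟨τ, B(X,Y)⟩` (the biharmonic stress-energy tensor of a
Riemannian immersion). -/
theorem stmt_9 {V W : Type*}
    [NormedAddCommGroup V] [InnerProductSpace ℝ V]
    [NormedAddCommGroup W] [InnerProductSpace ℝ W]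
    {m : ℕ} (hm : 0 < m) (e : OrthonormalBasis (Fin m) ℝ V)
    (B : V →ₗ[ℝ] V →ₗ[ℝ] W) (hBsymm : ∀ X Y : V, B X Y = B Y X)
    (H : W) (hH : H = (m : ℝ)⁻¹ • ∑ i : Fin m, B (e i) (e i))
    (τ : W) (hτ : τ = (m : ℝ) • H)
    (Ric : V → V → ℝ) (r : ℝ) (hr : r = ∑ i : Fin m, Ric (e i) (e i))
    (Gpull : V → V → ℝ)
    (hGpull : ∀ X Y : V, Gpull X Y = (m : ℝ) * ⟪H, B X Y⟫ - Ric X Y)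
    (eG : ℝ) (heG : eG = ((m : ℝ) ^ 2 / 2) * ‖H‖ ^ 2 - r / 2)
    (SG : V → V → ℝ) (hSG : ∀ X Y : V, SG X Y = eG * ⟪X, Y⟫ - Gpull X Y)
    (S2 : V → V → ℝ)
    (hS2 : ∀ X Y : V, S2 X Y = -(1 / 2) * ‖τ‖ ^ 2 * ⟪X, Y⟫ + 2 * ⟪τ, B X Y⟫) :
    ∀ X Y : V, SG X Y
      = (Ric X Y - r / 2 * ⟪X, Y⟫) - (1 / 2) * S2 X Y + (1 / 4) * ‖τ‖ ^ 2 * ⟪X, Y⟫ :=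
  stmt_9_general B H τ hτ Ric r Gpull hGpull eG heG SG hSG S2 hS2
end

section
/- For an oriented surface M² in ℝⁿ, the following are equivalent: (a) S^G = e(G)g − G*g_can = 0; (b) the Gauss map G is weakly conformal; (c) M² is pseudo-umbilical, i.e. ⟨H, B(X,Y)⟩ = |H|²⟨X,Y⟩ for all X,Y. -/
open scoped RealInnerProductSpace

/-! In dimension two `e(G) = ½ tr G*g_can`, so `S^G = e(G) g − G*g_can` is minus the trace-free
part of `G*g_can = 2⟨H,B⟩ − K g`: it vanishes iff `G*g_can`, equivalently `⟨H,B⟩`, is a multiple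
`m g` of the metric. Tracing in an orthonormal frame pins the factor down:
`2m = tr ⟨H,B⟩ = ⟨H, tr B⟩ = 2|H|²`. The conformal factor is nonnegative because `G*g_can` is. -/

namespace OrthonormalBasis

variable {ι V W : Type*} [Fintype ι]
  [NormedAddCommGroup V] [InnerProductSpace ℝ V] [NormedAddCommGroup W] [InnerProductSpace ℝ W]

lemma sum_apply_self_of_eq_mul_inner (e : OrthonormalBasis ι ℝ V) {Φ : V → V → ℝ} {l : ℝ}
    (hΦ : ∀ X Y, Φ X Y = l * ⟪X, Y⟫) : ∑ i, Φ (e i) (e i) = Fintype.card ι * l := by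
  simp [hΦ, e.orthonormal.1, mul_comm]

lemma half_trace_mul_inner_sub_eq_zero_iff (e : OrthonormalBasis (Fin 2) ℝ V) (Φ : V → V → ℝ) :
    (∀ X Y, (1 / 2 * ∑ i, Φ (e i) (e i)) * ⟪X, Y⟫ - Φ X Y = 0) ↔
      ∃ l, ∀ X Y, Φ X Y = l * ⟪X, Y⟫ := by
  refine ⟨fun h => ⟨_, fun X Y => (sub_eq_zero.mp (h X Y)).symm⟩, fun ⟨l, hl⟩ X Y => ?_⟩
  rw [e.sum_apply_self_of_eq_mul_inner hl, hl]
  simp only [Fintype.card_fin, Nat.cast_ofNat]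
  ring

lemma sum_inner_apply_self_of_eq_mean (e : OrthonormalBasis ι ℝ V) {B : V → V → W} {H : W}
    (hH : H = (Fintype.card ι : ℝ)⁻¹ • ∑ i, B (e i) (e i)) :
    ∑ i, ⟪H, B (e i) (e i)⟫ = Fintype.card ι * ‖H‖ ^ 2 := by
  rcases isEmpty_or_nonempty ι with hι | hι
  · simp
  rw [← real_inner_self_eq_norm_sq]
  nth_rw 3 [hH]
  rw [inner_smul_right, ← mul_assoc, mul_inv_cancel₀ (by positivity), one_mul, inner_sum]

lemma exists_inner_mean_eq_mul_inner_iff [Nonempty ι] (e : OrthonormalBasis ι ℝ V)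
    {B : V → V → W} {H : W} (hH : H = (Fintype.card ι : ℝ)⁻¹ • ∑ i, B (e i) (e i)) :
    (∃ m, ∀ X Y, ⟪H, B X Y⟫ = m * ⟪X, Y⟫) ↔ ∀ X Y, ⟪H, B X Y⟫ = ‖H‖ ^ 2 * ⟪X, Y⟫ := by
  refine ⟨fun ⟨m, hm⟩ => ?_, fun h => ⟨_, h⟩⟩
  have htrace := e.sum_apply_self_of_eq_mul_inner (Φ := fun X Y => ⟪H, B X Y⟫) hm
  rw [e.sum_inner_apply_self_of_eq_mean hH] at htrace
  rwa [mul_left_cancel₀ (by positivity) htrace]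

end OrthonormalBasis

lemma exists_mul_sub_eq_mul_inner_iff {V : Type*} [NormedAddCommGroup V] [InnerProductSpace ℝ V]
    {a : ℝ} (ha : a ≠ 0) (K : ℝ) (Ψ : V → V → ℝ) :
    (∃ l, ∀ X Y, a * Ψ X Y - K * ⟪X, Y⟫ = l * ⟪X, Y⟫) ↔ ∃ m, ∀ X Y, Ψ X Y = m * ⟪X, Y⟫ := by
  constructor
  · rintro ⟨l, hl⟩
    exact ⟨(l + K) / a, fun X Y => by field_simp; linarith [hl X Y]⟩
  · rintro ⟨m, hm⟩
    exact ⟨a * m - K, fun X Y => by rw [hm]; ring⟩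

theorem stmt_10_general {V W : Type*}
    [NormedAddCommGroup V] [InnerProductSpace ℝ V]
    [NormedAddCommGroup W] [InnerProductSpace ℝ W]
    (e : OrthonormalBasis (Fin 2) ℝ V)
    (B : V →ₗ[ℝ] V →ₗ[ℝ] W)
    (H : W) (hH : H = (1 / 2 : ℝ) • (B (e 0) (e 0) + B (e 1) (e 1)))
    (K : ℝ)
    (Gpull : V → V → ℝ)
    (hGpull : ∀ X Y : V, Gpull X Y = 2 * ⟪H, B X Y⟫ - K * ⟪X, Y⟫)
    (eG : ℝ) (heG : eG = (1 / 2) * ∑ i : Fin 2, Gpull (e i) (e i))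
    (hGpos : ∀ X : V, 0 ≤ Gpull X X)
    (SG : V → V → ℝ) (hSG : ∀ X Y : V, SG X Y = eG * ⟪X, Y⟫ - Gpull X Y) :
    ((∀ X Y : V, SG X Y = 0) ↔ (∃ l : ℝ, 0 ≤ l ∧ ∀ X Y : V, Gpull X Y = l * ⟪X, Y⟫))
    ∧ ((∀ X Y : V, SG X Y = 0) ↔ (∀ X Y : V, ⟪H, B X Y⟫ = ‖H‖ ^ 2 * ⟪X, Y⟫)) := by
  have hH_mean : H = (Fintype.card (Fin 2) : ℝ)⁻¹ • ∑ i, B (e i) (e i) := by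
    simp [hH, Fin.sum_univ_two]
  have hSG_zero : (∀ X Y, SG X Y = 0) ↔ ∃ l, ∀ X Y, Gpull X Y = l * ⟪X, Y⟫ := by
    simp only [hSG, heG]
    exact e.half_trace_mul_inner_sub_eq_zero_iff Gpull
  refine ⟨hSG_zero.trans ⟨fun ⟨l, hl⟩ => ⟨l, ?_, hl⟩, fun ⟨l, _, hl⟩ => ⟨l, hl⟩⟩, ?_⟩
  · simpa [hl, real_inner_self_eq_norm_sq, e.orthonormal.1 0] using hGpos (e 0)
  · rw [hSG_zero, ← e.exists_inner_mean_eq_mul_inner_iff hH_mean]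
    simp only [hGpull]
    exact exists_mul_sub_eq_mul_inner_iff two_ne_zero K _

/-- for an oriented surface `M² ⊂ ℝⁿ` (pointwise, `V = T_pM` 2-dimensional,
`B` second fundamental form, `H` mean curvature, `Ric = K g`,
`G*g_can = 2⟨H,B⟩ − K g`, `e(G) = (1/2) trace G*g_can`, `S^G = e(G) g − G*g_can`),
the following are equivalent: (a) `S^G = 0`; (b) the Gauss map is weakly conformal,
i.e. `G*g_can = λ g` with `λ ≥ 0`; (c) `M²` is pseudo-umbilical,
i.e. `⟪H, B(X,Y)⟫ = |H|² ⟪X,Y⟫`. -/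
theorem stmt_10 {V W : Type*}
    [NormedAddCommGroup V] [InnerProductSpace ℝ V]
    [NormedAddCommGroup W] [InnerProductSpace ℝ W]
    (e : OrthonormalBasis (Fin 2) ℝ V)
    (B : V →ₗ[ℝ] V →ₗ[ℝ] W) (hBsymm : ∀ X Y : V, B X Y = B Y X)
    (H : W) (hH : H = (1 / 2 : ℝ) • (B (e 0) (e 0) + B (e 1) (e 1)))
    (K : ℝ)
    (Gpull : V → V → ℝ)
    (hGpull : ∀ X Y : V, Gpull X Y = 2 * ⟪H, B X Y⟫ - K * ⟪X, Y⟫)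
    (eG : ℝ) (heG : eG = (1 / 2) * ∑ i : Fin 2, Gpull (e i) (e i))
    (hGpos : ∀ X : V, 0 ≤ Gpull X X)
    (SG : V → V → ℝ) (hSG : ∀ X Y : V, SG X Y = eG * ⟪X, Y⟫ - Gpull X Y) :
    ((∀ X Y : V, SG X Y = 0) ↔ (∃ l : ℝ, 0 ≤ l ∧ ∀ X Y : V, Gpull X Y = l * ⟪X, Y⟫))
    ∧ ((∀ X Y : V, SG X Y = 0) ↔ (∀ X Y : V, ⟪H, B X Y⟫ = ‖H‖ ^ 2 * ⟪X, Y⟫)) :=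
  stmt_10_general e B H hH K Gpull hGpull eG heG hGpos SG hSG
end

section
/- If M^m ⊂ ℝⁿ (m > 2) satisfies S₂^i = f·g and its Gauss map is weakly conformal, then M is Einstein with Ric = ((|τ(i)|² − 2e(G))/m)·g, and f = ((4−m)/(2m))|τ(i)|². -/
open scoped RealInnerProductSpace

/-!
Everything is pointwise linear algebra. Writing `τ = trace B`, the hypothesis `S₂ = f g` says
that `⟨τ, B⟩ = (f/2 + |τ|²/4) g`; taking traces gives `(f/2 + |τ|²/4) m = |τ|²`, which is the
formula for `f` and shows `⟨τ, B⟩ = (|τ|²/m) g`. Weak conformality turns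
`G*g_can = ⟨τ, B⟩ − Ric` into `Ric = ⟨τ, B⟩ − (2/m) e(G) g`, hence `M` is Einstein.
-/

section TraceOfSecondFundamentalForm

variable {ι V W : Type*} [Fintype ι]
  [NormedAddCommGroup V] [InnerProductSpace ℝ V] [NormedAddCommGroup W] [InnerProductSpace ℝ W]

theorem OrthonormalBasis.sum_mul_inner_self (e : OrthonormalBasis ι ℝ V) (c : ℝ) :
    ∑ i, c * ⟪e i, e i⟫ = c * Fintype.card ι := by
  simp [mul_comm]

theorem OrthonormalBasis.mul_card_eq_norm_sq_of_inner_eq_mul_inner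
    (e : OrthonormalBasis ι ℝ V) {B : V →ₗ[ℝ] V →ₗ[ℝ] W} {τ : W}
    (hτ : τ = ∑ i, B (e i) (e i)) {c : ℝ} (hc : ∀ X Y, ⟪τ, B X Y⟫ = c * ⟪X, Y⟫) :
    c * Fintype.card ι = ‖τ‖ ^ 2 :=
  calc c * Fintype.card ι = ∑ i, ⟪τ, B (e i) (e i)⟫ := by
        simp only [hc, e.sum_mul_inner_self]
    _ = ⟪τ, τ⟫ := by rw [← inner_sum, ← hτ]
    _ = ‖τ‖ ^ 2 := real_inner_self_eq_norm_sq τ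

end TraceOfSecondFundamentalForm

theorem stmt_12_general {V W : Type*}
    [NormedAddCommGroup V] [InnerProductSpace ℝ V]
    [NormedAddCommGroup W] [InnerProductSpace ℝ W]
    {M : Type*} {m : ℕ} (hm : 2 < m) (e : OrthonormalBasis (Fin m) ℝ V)
    (B : M → V →ₗ[ℝ] V →ₗ[ℝ] W)
    (H : M → W) (hH : ∀ p, H p = (m : ℝ)⁻¹ • ∑ i : Fin m, B p (e i) (e i))
    (τ : M → W) (hτ : ∀ p, τ p = (m : ℝ) • H p)
    (Ric : M → V → V → ℝ)
    (Gpull : M → V → V → ℝ)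
    (hGpull : ∀ p (X Y : V), Gpull p X Y = (m : ℝ) * ⟪H p, B p X Y⟫ - Ric p X Y)
    (eG : M → ℝ)
    (S2 : M → V → V → ℝ)
    (hS2 : ∀ p (X Y : V), S2 p X Y
      = -(1 / 2) * ‖τ p‖ ^ 2 * ⟪X, Y⟫ + 2 * ⟪τ p, B p X Y⟫)
    (f : M → ℝ) (hS2f : ∀ p (X Y : V), S2 p X Y = f p * ⟪X, Y⟫)
    (hconf : ∀ p (X Y : V), Gpull p X Y = (2 / (m : ℝ)) * eG p * ⟪X, Y⟫) :
    (∀ p (X Y : V), Ric p X Y = ((‖τ p‖ ^ 2 - 2 * eG p) / (m : ℝ)) * ⟪X, Y⟫)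
    ∧ (∀ p, f p = ((4 - (m : ℝ)) / (2 * (m : ℝ))) * ‖τ p‖ ^ 2) := by
  have hm0 : (m : ℝ) ≠ 0 := Nat.cast_ne_zero.mpr (by omega)
  have hτ_trace (p : M) : τ p = ∑ i, B p (e i) (e i) := by
    rw [hτ, hH, smul_inv_smul₀ hm0]
  have hτB (p : M) (X Y : V) : ⟪τ p, B p X Y⟫ = (f p / 2 + ‖τ p‖ ^ 2 / 4) * ⟪X, Y⟫ := by
    linarith [hS2 p X Y, hS2f p X Y]
  have hf (p : M) : f p = ((4 - (m : ℝ)) / (2 * (m : ℝ))) * ‖τ p‖ ^ 2 := by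
    have htrace := e.mul_card_eq_norm_sq_of_inner_eq_mul_inner (hτ_trace p) (hτB p)
    rw [Fintype.card_fin] at htrace
    field_simp
    linarith
  refine ⟨fun p X Y => ?_, hf⟩
  have hRic : Ric p X Y = ⟪τ p, B p X Y⟫ - 2 / m * eG p * ⟪X, Y⟫ := by
    rw [hτ, real_inner_smul_left]
    linarith [hGpull p X Y, hconf p X Y]
  rw [hRic, hτB, hf]
  field_simp
  ring

/-- if `Mᵐ ⊂ ℝⁿ` (`m > 2`) satisfies `S₂^i = f g` and its Gauss map is
weakly conformal (`G*g_can = (2/m) e(G) g`), then `M` is Einstein with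
`Ric = ((|τ(i)|² − 2 e(G))/m) g` and `f = ((4 − m)/(2m)) |τ(i)|²`.  The setting is modelled
pointwise over the points `p : M`, with `B` the second fundamental form, `H` the mean
curvature, `τ = m H`, `Gpull = m⟨H,B⟩ − Ric`, `eG = (1/2) trace Gpull`, and
`S₂(X,Y) = −(1/2)|τ|²⟨X,Y⟩ + 2⟨τ, B(X,Y)⟩`. -/
theorem stmt_12 {V W : Type*}
    [NormedAddCommGroup V] [InnerProductSpace ℝ V]
    [NormedAddCommGroup W] [InnerProductSpace ℝ W]
    {M : Type*} {m : ℕ} (hm : 2 < m) (e : OrthonormalBasis (Fin m) ℝ V)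
    (B : M → V →ₗ[ℝ] V →ₗ[ℝ] W) (hBsymm : ∀ p (X Y : V), B p X Y = B p Y X)
    (H : M → W) (hH : ∀ p, H p = (m : ℝ)⁻¹ • ∑ i : Fin m, B p (e i) (e i))
    (τ : M → W) (hτ : ∀ p, τ p = (m : ℝ) • H p)
    (Ric : M → V → V → ℝ)
    (Gpull : M → V → V → ℝ)
    (hGpull : ∀ p (X Y : V), Gpull p X Y = (m : ℝ) * ⟪H p, B p X Y⟫ - Ric p X Y)
    (eG : M → ℝ) (heG : ∀ p, eG p = (1 / 2) * ∑ i : Fin m, Gpull p (e i) (e i))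
    (S2 : M → V → V → ℝ)
    (hS2 : ∀ p (X Y : V), S2 p X Y
      = -(1 / 2) * ‖τ p‖ ^ 2 * ⟪X, Y⟫ + 2 * ⟪τ p, B p X Y⟫)
    (f : M → ℝ) (hS2f : ∀ p (X Y : V), S2 p X Y = f p * ⟪X, Y⟫)
    (hconf : ∀ p (X Y : V), Gpull p X Y = (2 / (m : ℝ)) * eG p * ⟪X, Y⟫) :
    (∀ p (X Y : V), Ric p X Y = ((‖τ p‖ ^ 2 - 2 * eG p) / (m : ℝ)) * ⟪X, Y⟫)
    ∧ (∀ p, f p = ((4 - (m : ℝ)) / (2 * (m : ℝ))) * ‖τ p‖ ^ 2) :=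
  stmt_12_general hm e B H hH τ hτ Ric Gpull hGpull eG S2 hS2 f hS2f hconf
end

section
/- (Pointwise algebraic step of Jiang's theorem) For a Riemannian immersion φ : (M⁴,g) → (N,h) with nowhere-vanishing mean curvature H, the biharmonic stress-energy tensor S₂ vanishes if and only if φ is pseudo-umbilical. -/
open scoped RealInnerProductSpace

/-! In dimension `m`, `τ = m H` turns the formula for `S₂` into
`S₂(X,Y) = 2m (⟨H, B(X,Y)⟩ - (m/4) |H|² ⟨X,Y⟩)`. For `m = 4` the bracket is exactly the
pseudo-umbilicity defect, so `S₂` vanishes iff `φ` is pseudo-umbilical, with no trace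
condition left over. -/

theorem neg_half_mul_norm_sq_four_smul_add_two_mul_inner {W : Type*}
    [NormedAddCommGroup W] [InnerProductSpace ℝ W] (H b : W) (g : ℝ) :
    -(1 / 2) * ‖(4 : ℝ) • H‖ ^ 2 * g + 2 * ⟪(4 : ℝ) • H, b⟫ = 8 * (⟪H, b⟫ - ‖H‖ ^ 2 * g) := by
  rw [norm_smul, real_inner_smul_left, Real.norm_of_nonneg (by norm_num : (0 : ℝ) ≤ 4)]
  ring

theorem stmt_14_general {V W : Type*}
    [NormedAddCommGroup V] [InnerProductSpace ℝ V]
    [NormedAddCommGroup W] [InnerProductSpace ℝ W]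
    (B : V →ₗ[ℝ] V →ₗ[ℝ] W)
    (H : W)
    (τ : W) (hτ : τ = (4 : ℝ) • H)
    (S2 : V → V → ℝ)
    (hS2 : ∀ X Y : V, S2 X Y = -(1 / 2) * ‖τ‖ ^ 2 * ⟪X, Y⟫ + 2 * ⟪τ, B X Y⟫) :
    (∀ X Y : V, S2 X Y = 0) ↔ (∀ X Y : V, ⟪H, B X Y⟫ = ‖H‖ ^ 2 * ⟪X, Y⟫) := by
  have hS2_eq : ∀ X Y : V, S2 X Y = 8 * (⟪H, B X Y⟫ - ‖H‖ ^ 2 * ⟪X, Y⟫) := fun X Y => by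
    rw [hS2, hτ, neg_half_mul_norm_sq_four_smul_add_two_mul_inner]
  simp only [hS2_eq, mul_eq_zero, OfNat.ofNat_ne_zero, false_or, sub_eq_zero]

/-- pointwise algebraic step of Jiang's theorem: for a Riemannian immersion
`φ : (M⁴,g) → (N,h)` with nowhere-vanishing mean curvature (pointwise: `V = T_pM`
4-dimensional, `B` second fundamental form, `H = (1/4) trace B ≠ 0`, `τ(φ) = 4H`,
`S₂(X,Y) = −(1/2)|τ|²⟨X,Y⟩ + 2⟨τ, B(X,Y)⟩`), the tensor `S₂` vanishes iff `φ` is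
pseudo-umbilical. -/
theorem stmt_14 {V W : Type*}
    [NormedAddCommGroup V] [InnerProductSpace ℝ V]
    [NormedAddCommGroup W] [InnerProductSpace ℝ W]
    (e : OrthonormalBasis (Fin 4) ℝ V)
    (B : V →ₗ[ℝ] V →ₗ[ℝ] W) (hBsymm : ∀ X Y : V, B X Y = B Y X)
    (H : W) (hH : H = (4 : ℝ)⁻¹ • ∑ i : Fin 4, B (e i) (e i)) (hH0 : H ≠ 0)
    (τ : W) (hτ : τ = (4 : ℝ) • H)
    (S2 : V → V → ℝ)
    (hS2 : ∀ X Y : V, S2 X Y = -(1 / 2) * ‖τ‖ ^ 2 * ⟪X, Y⟫ + 2 * ⟪τ, B X Y⟫) :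
    (∀ X Y : V, S2 X Y = 0) ↔ (∀ X Y : V, ⟪H, B X Y⟫ = ‖H‖ ^ 2 * ⟪X, Y⟫) :=
  stmt_14_general B H τ hτ S2 hS2
end

section
/- Let M² ⊂ ℝⁿ be a compact oriented surface with harmonic Gauss map, and suppose the first normal variation of the Willmore functional vanishes at M, so that ∫_M ⟨−4|H|²H + 2⟨H·B, B⟩, V⟩ v_g = 0 for all normal fields V. Then −2|H|²H + ⟨H·B, B⟩ = 0 pointwise, and consequently M² is pseudo-umbilical. -/
open scoped RealInnerProductSpace
open MeasureTheory

/-- Pointwise algebraic lemma: if `H = ½(B00 + B11)` and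
`⟪H,B00⟫•B00 + 2⟪H,B01⟫•B01 + ⟪H,B11⟫•B11 = 2‖H‖²•H`, then
`⟪H,B00⟫ = ‖H‖²`, `⟪H,B01⟫ = 0`, `⟪H,B11⟫ = ‖H‖²`. -/
lemma stmt_17_aux {W : Type*} [NormedAddCommGroup W] [InnerProductSpace ℝ W]
    (H B00 B01 B11 : W)
    (hH : H = (1 / 2 : ℝ) • (B00 + B11))
    (hCval : ⟪H, B00⟫ • B00 + ⟪H, B01⟫ • B01 + (⟪H, B01⟫ • B01 + ⟪H, B11⟫ • B11)
      = (2 * ‖H‖ ^ 2) • H) :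
    ⟪H, B00⟫ = ‖H‖ ^ 2 ∧ ⟪H, B01⟫ = 0 ∧ ⟪H, B11⟫ = ‖H‖ ^ 2 := by
  obtain ⟨a, ha⟩ : ∃ a, ⟪H, B00⟫ = a := ⟨_, rfl⟩
  obtain ⟨b, hb⟩ : ∃ b, ⟪H, B01⟫ = b := ⟨_, rfl⟩
  obtain ⟨c, hc⟩ : ∃ c, ⟪H, B11⟫ = c := ⟨_, rfl⟩
  obtain ⟨s, hs⟩ : ∃ s, ‖H‖ ^ 2 = s := ⟨_, rfl⟩
  rw [ha, hb, hc, hs] at hCval ⊢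
  have hHH : ⟪H, H⟫ = s := by rw [← hs]; exact real_inner_self_eq_norm_sq H
  have htrace : a + c = 2 * s := by
    have h1 : ⟪H, H⟫ = s := hHH
    nth_rewrite 2 [hH] at h1
    rw [inner_smul_right, inner_add_right, ha, hc] at h1
    linarith
  have hquad : a * a + b * b + (b * b + c * c) = 2 * s * s := by
    have h2 := congrArg (fun w => ⟪H, w⟫) hCval
    simpa [inner_add_right, inner_smul_right, ha, hb, hc, hHH, hs] using h2
  have hac : a = c := by nlinarith [sq_nonneg (a - c), sq_nonneg b]
  refine ⟨by linarith, by nlinarith [sq_nonneg b], by linarith⟩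

/-- let `M² ⊂ ℝⁿ` be a compact oriented surface (modelled over the points
`p : M`, a compact topological measure space with a measure of full support — the
Riemannian volume) with harmonic Gauss map, and suppose the first normal variation of the
Willmore functional vanishes:
`∫_M ⟪−4|H|² H + 2⟨H·B,B⟩, V⟫ v_g = 0` for all (continuous) normal fields `V`, where
`⟨H·B,B⟩ p = ∑ᵢⱼ ⟪H p, B p (eᵢ,eⱼ)⟫ • B p (eᵢ,eⱼ)`.  Then `−2|H|² H + ⟨H·B,B⟩ = 0`
pointwise, and consequently `M²` is pseudo-umbilical. -/
theorem stmt_17 {V W : Type*}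
    [NormedAddCommGroup V] [InnerProductSpace ℝ V]
    [NormedAddCommGroup W] [InnerProductSpace ℝ W]
    {M : Type*} [TopologicalSpace M] [CompactSpace M] [MeasurableSpace M] [BorelSpace M]
    (μ : Measure M) [IsFiniteMeasure μ] [μ.IsOpenPosMeasure]
    (e : OrthonormalBasis (Fin 2) ℝ V)
    (B : M → V →ₗ[ℝ] V →ₗ[ℝ] W) (hBsymm : ∀ p (X Y : V), B p X Y = B p Y X)
    (H : M → W)
    (hH : ∀ p, H p = (1 / 2 : ℝ) • (B p (e 0) (e 0) + B p (e 1) (e 1)))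
    (C : M → W)
    (hC : ∀ p, C p = ∑ i : Fin 2, ∑ j : Fin 2,
      ⟪H p, B p (e i) (e j)⟫ • B p (e i) (e j))
    (F : M → W) (hF : ∀ p, F p = (-4 * ‖H p‖ ^ 2) • H p + (2 : ℝ) • C p)
    (hFcont : Continuous F)
    (hvar : ∀ Vf : M → W, Continuous Vf → ∫ p, ⟪F p, Vf p⟫ ∂μ = 0) :
    (∀ p, (-2 * ‖H p‖ ^ 2) • H p + C p = 0)
    ∧ (∀ p (X Y : V), ⟪H p, B p X Y⟫ = ‖H p‖ ^ 2 * ⟪X, Y⟫) := by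
  -- Step 1: F vanishes identically
  have hint : ∫ p, ⟪F p, F p⟫ ∂μ = 0 := hvar F hFcont
  have hcont2 : Continuous fun p => ⟪F p, F p⟫ := hFcont.inner hFcont
  have hinteg : Integrable (fun p => ⟪F p, F p⟫) μ :=
    hcont2.integrable_of_hasCompactSupport (HasCompactSupport.of_compactSpace _)
  have hae : (fun p => ⟪F p, F p⟫) =ᵐ[μ] 0 :=
    (integral_eq_zero_iff_of_nonneg (fun p => real_inner_self_nonneg) hinteg).mp hint
  have hFzero : ∀ p, F p = 0 := by
    have h := (hcont2.ae_eq_iff_eq μ continuous_const).mp hae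
    intro p
    exact inner_self_eq_zero.mp (congrFun h p)
  -- Step 2: pointwise Euler-Lagrange equation
  have hEL : ∀ p, (-2 * ‖H p‖ ^ 2) • H p + C p = 0 := by
    intro p
    have h := hFzero p
    rw [hF p] at h
    have h2 : (-2 * ‖H p‖ ^ 2) • H p + C p
        = (1 / 2 : ℝ) • ((-4 * ‖H p‖ ^ 2) • H p + (2 : ℝ) • C p) := by module
    rw [h2, h, smul_zero]
  refine ⟨hEL, fun p X Y => ?_⟩
  -- Step 3: pointwise algebra
  have hB10 : B p (e 1) (e 0) = B p (e 0) (e 1) := hBsymm p (e 1) (e 0)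
  have hCval : ⟪H p, B p (e 0) (e 0)⟫ • B p (e 0) (e 0)
      + ⟪H p, B p (e 0) (e 1)⟫ • B p (e 0) (e 1)
      + (⟪H p, B p (e 0) (e 1)⟫ • B p (e 0) (e 1)
      + ⟪H p, B p (e 1) (e 1)⟫ • B p (e 1) (e 1)) = (2 * ‖H p‖ ^ 2) • H p := by
    have h := hEL p
    have h2 : C p = (2 * ‖H p‖ ^ 2) • H p := by
      have h3 : (2 * ‖H p‖ ^ 2) • H p = -((-2 * ‖H p‖ ^ 2) • H p) := by module
      rw [h3]; exact eq_neg_of_add_eq_zero_right h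
    rw [hC p] at h2
    simpa [Fin.sum_univ_two, hB10] using h2
  obtain ⟨hA, hBz, hCc⟩ := stmt_17_aux (H p) _ _ _ (hH p) hCval
  -- expand X and Y in the orthonormal basis
  have horth := orthonormal_iff_ite.mp e.orthonormal
  have hX : (⟪e 0, X⟫) • e 0 + (⟪e 1, X⟫) • e 1 = X := by
    simpa [Fin.sum_univ_two] using e.sum_repr' X
  have hY : (⟪e 0, Y⟫) • e 0 + (⟪e 1, Y⟫) • e 1 = Y := by
    simpa [Fin.sum_univ_two] using e.sum_repr' Y
  have hXY : ⟪X, Y⟫ = ⟪e 0, X⟫ * ⟪e 0, Y⟫ + ⟪e 1, X⟫ * ⟪e 1, Y⟫ := by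
    rw [← hX, ← hY]
    simp [inner_add_left, inner_add_right, real_inner_smul_left, real_inner_smul_right,
      horth]
    ring
  have hexp : ⟪H p, B p X Y⟫
      = (⟪e 0, X⟫ * ⟪e 0, Y⟫ + ⟪e 1, X⟫ * ⟪e 1, Y⟫) * ‖H p‖ ^ 2 := by
    conv_lhs => rw [← hX, ← hY]
    simp only [map_add, _root_.map_smul, LinearMap.add_apply, LinearMap.smul_apply,
      inner_add_right, real_inner_smul_right, hB10, hA, hBz, hCc]
    ring
  rw [hexp, hXY]
  ring
end
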